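/- Let a be a non-degenerate arrow environment, X the walk driven by a started at 0, T₋₁ its hitting time of −1, M = sup{ X_t : t < T₋₁ } ∈ ℕ ∪ {∞} the maximal position of the walk before hitting −1, and τ = inf{ n ≥ 0 : Z⁺_n = 0 } ∈ ℕ ∪ {∞} the extinction time of the process Z⁺ defined by Z⁺_0 = 1, Z⁺_n = U⁺_{a(n−1,·)}(Z⁺_{n−1}). Then τ = M + 1 (with the convention ∞ = ∞ + 1). -/

import Mathlib

open Filter Set

/-- The number of `true`s (1's) appearing strictly before the `x`-th `false` (0)
in the binary sequence `b`; `Uplus b 0 = 0`. -/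
noncomputable def Uplus (b : ℕ → Bool) (x : ℕ) : ℕ :=
  if x = 0 then 0
  else sInf {j : ℕ | ((Finset.range j).filter (fun i => b i = false)).card = x} - x

/-- The number of `false`s (0's) appearing strictly before the `x`-th `true` (1). -/
noncomputable def Uminus (b : ℕ → Bool) (x : ℕ) : ℕ :=
  Uplus (fun i => !(b i)) x

/-- A binary sequence is non-degenerate if it has infinitely many 0's and
infinitely many 1's. -/
def NonDeg (b : ℕ → Bool) : Prop :=
  {i | b i = false}.Infinite ∧ {i | b i = true}.Infinite

/-- An arrow environment is non-degenerate if every column is non-degenerate. -/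
def NonDegEnv (a : ℤ → ℕ → Bool) : Prop := ∀ x : ℤ, NonDeg (a x)

/-- The history (most recent position first) of the walk driven by the arrow
environment `a`, started at `0`: at its `k`-th visit (`k` counted from `0`)
to site `x` the walk moves right if `a x k = true` and left otherwise. -/
def walkHist (a : ℤ → ℕ → Bool) : ℕ → List ℤ
  | 0 => [0]
  | t + 1 =>
    let h := walkHist a t
    let x := h.headI
    let k := h.countP (fun y => decide (y = x)) - 1
    (x + (if a x k then 1 else -1)) :: h

/-- The position at time `t` of the walk driven by `a`, started at `0`. -/
def walk (a : ℤ → ℕ → Bool) (t : ℕ) : ℤ := (walkHist a t).headI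

/-- `Zplus a n y`: the forward process `Z⁺` with initial value `y`. -/
noncomputable def Zplus (a : ℤ → ℕ → Bool) : ℕ → ℕ → ℕ
  | 0, y => y
  | n + 1, y => Uplus (a (n : ℤ)) (Zplus a n y)

/-- `Zminus a n y`: the backward process `Z⁻` with initial value `y`. -/
noncomputable def Zminus (a : ℤ → ℕ → Bool) : ℕ → ℕ → ℕ
  | 0, y => y
  | n + 1, y => Uminus (a (-(n : ℤ))) (Zminus a n y)

/-- `ZminusBack a l y = U⁻_{a 0} ∘ ⋯ ∘ U⁻_{a (l-1)} (y)`. -/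
noncomputable def ZminusBack (a : ℤ → ℕ → Bool) (l y : ℕ) : ℕ :=
  (List.range l).foldr (fun i z => Uminus (a (i : ℤ)) z) y

/-!
Let `upCross t n` be the number of steps `n → n + 1` taken before time `t`. Crossings of an edge
alternate in direction, and at its visits to `n + 1` the walk reads the column `a (n + 1)`, moving
right on a `1` and left on a `0`; so once the walk is back below `n + 1`, the number of steps
`n + 1 → n + 2` is `U⁺_{a (n + 1)}` of the number of steps `n → n + 1`. At the hitting time of
`-1` this gives `upCross T n = Z⁺_{n + 1}`, and before it the same recursion, with `U⁺` monotone,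
gives `upCross t n ≤ Z⁺_{n + 1}`. Hence the level `N` is reached before `-1` iff `Z⁺_N ≠ 0`.
If `-1` is never hit, every site is visited only finitely often: the left steps from `n + 1` are
bounded by the visits to `n` (and there are none from `0`), and as each column has infinitely many
`0`s this bounds the visits to `n + 1`. So the walk is unbounded, while `Z⁺` never dies out.
-/

open Nat

theorem ENat.iInf_setOf_eq_iSup_setOf_not_add_one {P : ℕ → Prop} (hP : Monotone P) (h0 : ¬ P 0) :
    ⨅ n ∈ {n | P n}, (n : ℕ∞) = (⨆ n ∈ {n | ¬ P n}, (n : ℕ∞)) + 1 := by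
  by_cases h : ∃ n, P n
  swap
  · simp [not_exists.1 h, ENat.iSup_natCast]
  classical
  obtain ⟨m, hm⟩ : ∃ m, Nat.find h = m + 1 :=
    Nat.exists_eq_add_one.2 (Nat.pos_of_ne_zero fun h' => h0 (h' ▸ Nat.find_spec h))
  have hnot : ∀ n, ¬ P n ↔ n ≤ m := fun n =>
    ⟨fun hn => by_contra fun hmn => hn (hP (by omega) (Nat.find_spec h)),
     fun hn => Nat.find_min h (by omega)⟩
  have hinf : ⨅ n ∈ {n | P n}, (n : ℕ∞) = (m + 1 : ℕ) :=
    le_antisymm (iInf₂_le _ (hm ▸ Nat.find_spec h))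
      (le_iInf₂ fun n hn => by exact_mod_cast hm ▸ Nat.find_min' h hn)
  have hsup : ⨆ n ∈ {n | ¬ P n}, (n : ℕ∞) = m :=
    le_antisymm (iSup₂_le fun n hn => by exact_mod_cast (hnot n).1 hn)
      (le_iSup₂_of_le m ((hnot m).2 le_rfl) le_rfl)
  rw [hinf, hsup, Nat.cast_succ]

section Sequence

variable {b : ℕ → Bool}

theorem count_true_add_count_false (b : ℕ → Bool) (m : ℕ) :
    count (b · = true) m + count (b · = false) m = m := by
  induction m with
  | zero => simp
  | succ m ih => cases h : b m <;> simp [count_succ, h] <;> omega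

theorem Uplus_zero (b : ℕ → Bool) : Uplus b 0 = 0 := rfl

theorem Uplus_count_false {m : ℕ} (hm : ∀ k, m = k + 1 → b k = false) :
    Uplus b (count (b · = false) m) = count (b · = true) m := by
  cases m with
  | zero => simp [Uplus_zero]
  | succ k =>
    have hk := hm k rfl
    set x := count (b · = false) (k + 1)
    have hx : x = count (b · = false) k + 1 := by simp [x, count_succ, hk]
    have hinf : sInf {j | count (b · = false) j = x} = k + 1 := by
      refine le_antisymm (Nat.sInf_le rfl) (le_csInf ⟨_, rfl⟩ fun j hj => ?_)
      by_contra! hjk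
      have := count_monotone (b · = false) (Nat.le_of_lt_succ hjk)
      simp only [Set.mem_ofPred_eq] at hj
      omega
    have := count_true_add_count_false b (k + 1)
    simp only [Uplus, ← count_eq_card_filter_range, hinf, if_neg (show x ≠ 0 by omega)]
    omega

theorem exists_count_false_eq_and_Uplus_eq (hb : {i | b i = false}.Infinite) (x : ℕ) :
    ∃ m, count (b · = false) m = x ∧ Uplus b x = count (b · = true) m := by
  cases x with
  | zero => exact ⟨0, count_zero _, Uplus_zero b⟩
  | succ n =>
    refine ⟨nth (b · = false) n + 1, count_nth_succ_of_infinite hb n, ?_⟩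
    rw [← Uplus_count_false, count_nth_succ_of_infinite hb n]
    rintro k hk
    exact Nat.succ_injective hk ▸ nth_mem_of_infinite hb n

theorem count_true_le_Uplus (hb : {i | b i = false}.Infinite) {m x : ℕ}
    (h : count (b · = false) m < x) : count (b · = true) m ≤ Uplus b x := by
  obtain ⟨m', hm', hU⟩ := exists_count_false_eq_and_Uplus_eq hb x
  rw [hU]
  exact count_monotone _ (Nat.lt_of_count_lt_count (hm' ▸ h)).le

theorem Uplus_monotone (hb : {i | b i = false}.Infinite) : Monotone (Uplus b) :=
  monotone_nat_of_le_succ fun x => by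
    obtain ⟨m, hm, hU⟩ := exists_count_false_eq_and_Uplus_eq hb x
    exact hU ▸ count_true_le_Uplus hb (by omega)

theorem finite_of_count_le {p : ℕ → Prop} [DecidablePred p] {B : ℕ} (h : ∀ n, count p n ≤ B) :
    {n | p n}.Finite := by
  by_contra hinf
  have := h (nth p B + 1)
  rw [count_nth_succ_of_infinite hinf] at this
  omega

end Sequence

section Walk

variable (a : ℤ → ℕ → Bool)

def visits (t : ℕ) (x : ℤ) : ℕ := count (fun s => walk a s = x) t

def upCross (t : ℕ) (x : ℤ) : ℕ := count (fun s => walk a s = x ∧ walk a (s + 1) = x + 1) t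

def downCross (t : ℕ) (x : ℤ) : ℕ := count (fun s => walk a s = x ∧ walk a (s + 1) = x - 1) t

theorem walk_zero : walk a 0 = 0 := rfl

theorem visits_succ (t : ℕ) (x : ℤ) :
    visits a (t + 1) x = visits a t x + if walk a t = x then 1 else 0 :=
  count_succ _ _

theorem countP_walkHist (t : ℕ) (x : ℤ) :
    (walkHist a t).countP (fun y => decide (y = x)) = visits a (t + 1) x := by
  induction t with
  | zero => rw [visits_succ]; simp [walkHist, visits, count_zero, walk_zero, eq_comm]
  | succ t ih =>
    rw [visits_succ, ← ih, show walkHist a (t + 1) = walk a (t + 1) :: walkHist a t from rfl,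
      List.countP_cons]
    simp

theorem walk_succ (t : ℕ) :
    walk a (t + 1) = walk a t + if a (walk a t) (visits a t (walk a t)) then 1 else -1 := by
  have hk : (walkHist a t).countP (fun y => decide (y = walk a t)) - 1 = visits a t (walk a t) := by
    simp [countP_walkHist, visits, count_succ]
  exact congrArg (fun k => walk a t + if a (walk a t) k then 1 else -1) hk

variable {a}

theorem walk_succ_eq_add_one_iff {t : ℕ} :
    walk a (t + 1) = walk a t + 1 ↔ a (walk a t) (visits a t (walk a t)) = true := by
  rw [walk_succ]; split <;> simp_all

theorem walk_succ_eq_sub_one_iff {t : ℕ} :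
    walk a (t + 1) = walk a t - 1 ↔ a (walk a t) (visits a t (walk a t)) = false := by
  rw [walk_succ]; split <;> simp_all <;> omega

theorem walk_succ_eq_add_one_or_sub_one (t : ℕ) :
    walk a (t + 1) = walk a t + 1 ∨ walk a (t + 1) = walk a t - 1 := by
  rw [walk_succ_eq_add_one_iff, walk_succ_eq_sub_one_iff]
  exact Bool.eq_false_or_eq_true _

theorem count_walk_eq_and_visits (q : ℕ → Prop) [DecidablePred q] (t : ℕ) (x : ℤ) :
    count (fun s => walk a s = x ∧ q (visits a s x)) t = count q (visits a t x) := by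
  induction t with
  | zero => exact count_zero _
  | succ t ih =>
    rw [count_succ, ih, visits_succ]
    by_cases h : walk a t = x <;> simp [h, count_succ]

end Walk

section Crossings

variable {a : ℤ → ℕ → Bool}

theorem upCross_eq_count_visits (t : ℕ) (x : ℤ) :
    upCross a t x = count (a x · = true) (visits a t x) := by
  rw [← count_walk_eq_and_visits, upCross]
  congr 1
  funext s
  apply propext
  constructor <;> rintro ⟨rfl, h⟩
  · exact ⟨rfl, walk_succ_eq_add_one_iff.1 h⟩
  · exact ⟨rfl, walk_succ_eq_add_one_iff.2 h⟩

theorem downCross_eq_count_visits (t : ℕ) (x : ℤ) :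
    downCross a t x = count (a x · = false) (visits a t x) := by
  rw [← count_walk_eq_and_visits, downCross]
  congr 1
  funext s
  apply propext
  constructor <;> rintro ⟨rfl, h⟩
  · exact ⟨rfl, walk_succ_eq_sub_one_iff.1 h⟩
  · exact ⟨rfl, walk_succ_eq_sub_one_iff.2 h⟩

/-- Crossings of the edge between `x` and `x + 1` alternate in direction; the indicators record
on which side of the edge the walk starts and where it is at time `t`. -/
theorem crossing_balance (t : ℕ) (x : ℤ) :
    upCross a t x + (if x + 1 ≤ 0 then 1 else 0) =
      downCross a t (x + 1) + if x + 1 ≤ walk a t then 1 else 0 := by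
  induction t with
  | zero => simp [upCross, downCross, count_zero, walk_zero]
  | succ t ih =>
    simp only [upCross, downCross, count_succ] at ih ⊢
    rcases walk_succ_eq_add_one_or_sub_one t with h | h <;> rw [h] <;> split_ifs at ih ⊢ <;> omega

theorem last_arrow_eq_false_of_walk_lt {t : ℕ} {x : ℤ} (h : walk a t < x) :
    ∀ k, visits a t x = k + 1 → a x k = false := by
  induction t with
  | zero => simp [visits, count_zero]
  | succ t ih =>
    intro k hk
    have hstep := walk_succ_eq_add_one_or_sub_one (a := a) t
    rw [visits_succ] at hk
    by_cases hx : walk a t = x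
    · rw [if_pos hx, Nat.add_right_cancel_iff] at hk
      subst hx hk
      exact walk_succ_eq_sub_one_iff.1 (by omega)
    · rw [if_neg hx, add_zero] at hk
      exact ih (by omega) k hk

theorem upCross_eq_Uplus {t : ℕ} {x : ℤ} (h : walk a t < x) :
    upCross a t x = Uplus (a x) (downCross a t x) := by
  rw [upCross_eq_count_visits, downCross_eq_count_visits,
    Uplus_count_false (last_arrow_eq_false_of_walk_lt h)]

theorem upCross_le_Uplus {x : ℤ} (hb : {i | a x i = false}.Infinite) (t : ℕ) :
    upCross a t x ≤ Uplus (a x) (downCross a t x + if x ≤ walk a t then 1 else 0) := by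
  split_ifs with hx
  · rw [upCross_eq_count_visits, downCross_eq_count_visits]
    exact count_true_le_Uplus hb (Nat.lt_succ_self _)
  · exact (upCross_eq_Uplus (not_le.1 hx)).le

theorem upCross_neg_one {t : ℕ} (h : ∀ s < t, walk a s ≠ -1) : upCross a t (-1) = 0 :=
  count_iff_forall_not.2 fun s hs hc => h s hs hc.1

theorem downCross_zero_add {t : ℕ} (h : ∀ s < t, walk a s ≠ -1) :
    downCross a t 0 + (if 0 ≤ walk a t then 1 else 0) = 1 := by
  simpa [upCross_neg_one h] using (crossing_balance (a := a) t (-1)).symm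

end Crossings

section Extinction

variable {a : ℤ → ℕ → Bool}

theorem upCross_le_Zplus (hnd : NonDegEnv a) {t : ℕ} (h : ∀ s < t, walk a s ≠ -1) (n : ℕ) :
    upCross a t n ≤ Zplus a (n + 1) 1 := by
  induction n with
  | zero =>
    calc upCross a t ((0 : ℕ) : ℤ)
        ≤ Uplus (a 0) (downCross a t 0 + if 0 ≤ walk a t then 1 else 0) :=
          upCross_le_Uplus (hnd 0).1 t
      _ = Zplus a 1 1 := by rw [downCross_zero_add h]; rfl
  | succ n ih =>
    have hbal := crossing_balance (a := a) t n
    have hn : ¬ ((n : ℤ) + 1 ≤ 0) := by omega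
    calc upCross a t ((n + 1 : ℕ) : ℤ)
        ≤ Uplus (a (n + 1 : ℕ))
            (downCross a t ((n + 1 : ℕ) : ℤ) + if ((n + 1 : ℕ) : ℤ) ≤ walk a t then 1 else 0) :=
          upCross_le_Uplus (hnd _).1 t
      _ ≤ Uplus (a (n + 1 : ℕ)) (Zplus a (n + 1) 1) :=
          Uplus_monotone (hnd _).1 (by rw [if_neg hn] at hbal; push_cast; omega)
      _ = Zplus a (n + 2) 1 := rfl

theorem upCross_eq_Zplus {T : ℕ} (hT : walk a T = -1) (h : ∀ s < T, walk a s ≠ -1) (n : ℕ) :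
    upCross a T n = Zplus a (n + 1) 1 := by
  induction n with
  | zero =>
    have hdown := downCross_zero_add h
    rw [if_neg (by omega), add_zero] at hdown
    rw [Nat.cast_zero, upCross_eq_Uplus (by omega), hdown]
    rfl
  | succ n ih =>
    have hbal := crossing_balance (a := a) T n
    rw [if_neg (by omega), if_neg (by omega), add_zero, add_zero] at hbal
    rw [upCross_eq_Uplus (by omega), Nat.cast_succ, ← hbal, ih]
    rfl

theorem walk_nonneg {t : ℕ} (h : ∀ s ≤ t, walk a s ≠ -1) : 0 ≤ walk a t := by
  induction t with
  | zero => exact (walk_zero a).ge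
  | succ t ih =>
    have := ih fun s hs => h s (by omega)
    have := h (t + 1) le_rfl
    rcases walk_succ_eq_add_one_or_sub_one (a := a) t with h' | h' <;> omega

theorem visits_le_nth_of_downCross_le {t C : ℕ} {x : ℤ} (hb : {i | a x i = false}.Infinite)
    (h : downCross a t x ≤ C) : visits a t x ≤ nth (a x · = false) C := by
  rwa [← count_le_iff_le_nth hb, ← downCross_eq_count_visits]

theorem finite_setOf_walk_eq (hnd : NonDegEnv a) (h : ∀ s, walk a s ≠ -1) (x : ℕ) :
    {s | walk a s = x}.Finite := by
  induction x with
  | zero =>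
    refine finite_of_count_le fun t => visits_le_nth_of_downCross_le (C := 1) (hnd _).1 ?_
    have := downCross_zero_add (t := t) fun s _ => h s
    simp only [Nat.cast_zero]
    omega
  | succ x ih =>
    refine finite_of_count_le fun t =>
      visits_le_nth_of_downCross_le (C := ih.toFinset.card) (hnd _).1 ?_
    have hbal := crossing_balance (a := a) t x
    rw [if_neg (by omega)] at hbal
    calc downCross a t ((x + 1 : ℕ) : ℤ) ≤ upCross a t x := by push_cast; omega
      _ ≤ visits a t x := upCross_eq_count_visits (a := a) t x ▸ count_le _
      _ ≤ ih.toFinset.card := count_le_card ih t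

theorem exists_le_walk_of_forall_ne_neg_one (hnd : NonDegEnv a) (h : ∀ s, walk a s ≠ -1) (N : ℕ) :
    ∃ t, (N : ℤ) ≤ walk a t := by
  by_contra! hN
  refine Set.infinite_univ (((Finset.range N).finite_toSet.biUnion
    fun x _ => finite_setOf_walk_eq hnd h x).subset fun s _ => ?_)
  have := walk_nonneg (t := s) fun r _ => h r
  have := hN s
  exact Set.mem_biUnion (x := (walk a s).toNat) (by simp; omega) (by simp; omega)

theorem Zplus_ne_zero_of_le_walk (hnd : NonDegEnv a) {t N : ℕ} (h : ∀ s < t, walk a s ≠ -1)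
    (hN : (N : ℤ) ≤ walk a t) : Zplus a N 1 ≠ 0 := by
  cases N with
  | zero => exact one_ne_zero
  | succ n =>
    have hbal := crossing_balance (a := a) t n
    rw [if_neg (by omega), if_pos (by push_cast at hN; omega)] at hbal
    have := upCross_le_Zplus hnd h n
    omega

theorem exists_le_walk_of_Zplus_ne_zero (hnd : NonDegEnv a) {N : ℕ} (hZ : Zplus a N 1 ≠ 0) :
    ∃ t, (∀ s ≤ t, walk a s ≠ -1) ∧ (N : ℤ) ≤ walk a t := by
  by_cases hhit : ∃ T, walk a T = -1
  swap
  · obtain ⟨t, ht⟩ := exists_le_walk_of_forall_ne_neg_one hnd (not_exists.1 hhit) N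
    exact ⟨t, fun s _ => not_exists.1 hhit s, ht⟩
  classical
  obtain ⟨T, hT, hbefore⟩ : ∃ T, walk a T = -1 ∧ ∀ s < T, walk a s ≠ -1 :=
    ⟨Nat.find hhit, Nat.find_spec hhit, fun s => Nat.find_min hhit⟩
  cases N with
  | zero => exact ⟨0, fun s hs => by rw [Nat.le_zero.1 hs, walk_zero]; decide, le_rfl⟩
  | succ n =>
    rw [← upCross_eq_Zplus hT hbefore] at hZ
    obtain ⟨s, hsT, hs, hs1⟩ := count_ne_iff_exists.1 hZ
    refine ⟨s + 1, fun r hr => ?_, by rw [hs1]; push_cast; rfl⟩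
    rcases hr.lt_or_eq with hr | rfl
    · exact hbefore r (by omega)
    · rw [hs1]; omega

theorem Zplus_ne_zero_iff (hnd : NonDegEnv a) (N : ℕ) :
    Zplus a N 1 ≠ 0 ↔ ∃ t, (∀ s ≤ t, walk a s ≠ -1) ∧ (N : ℤ) ≤ walk a t :=
  ⟨exists_le_walk_of_Zplus_ne_zero hnd, fun ⟨_, ht, hN⟩ =>
    Zplus_ne_zero_of_le_walk hnd (fun s hs => ht s hs.le) hN⟩

theorem iSup_walk_eq_iSup_Zplus_ne_zero (hnd : NonDegEnv a) :
    ⨆ t ∈ {t : ℕ | ∀ s ≤ t, walk a s ≠ -1}, ((walk a t).toNat : ℕ∞) =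
      ⨆ n ∈ {n : ℕ | Zplus a n 1 ≠ 0}, (n : ℕ∞) := by
  apply le_antisymm
  · refine iSup₂_le fun t ht => le_iSup₂_of_le (walk a t).toNat ?_ le_rfl
    have := walk_nonneg ht
    exact (Zplus_ne_zero_iff hnd _).2 ⟨t, ht, by omega⟩
  · refine iSup₂_le fun n hn => ?_
    obtain ⟨t, ht, hN⟩ := (Zplus_ne_zero_iff hnd n).1 hn
    exact le_iSup₂_of_le t ht (by exact_mod_cast (by omega : n ≤ (walk a t).toNat))

theorem monotone_Zplus_eq_zero : Monotone fun n => Zplus a n 1 = 0 :=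
  monotone_nat_of_le_succ fun n (h : Zplus a n 1 = 0) =>
    show Uplus (a n) (Zplus a n 1) = 0 by rw [h]; rfl

end Extinction

/-- the extinction time `τ` of `Z⁺` equals `M + 1`, where `M` is the
maximal position of the walk before hitting `-1` (values in `ℕ∞`, with `∞ = ∞ + 1`). -/
theorem stmt_7 (a : ℤ → ℕ → Bool) (hnd : NonDegEnv a) :
    (⨅ n ∈ {n : ℕ | Zplus a n 1 = 0}, (n : ℕ∞)) =
      (⨆ t ∈ {t : ℕ | ∀ s ≤ t, walk a s ≠ -1}, ((walk a t).toNat : ℕ∞)) + 1 := by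
  rw [iSup_walk_eq_iSup_Zplus_ne_zero hnd]
  exact ENat.iInf_setOf_eq_iSup_setOf_not_add_one monotone_Zplus_eq_zero one_ne_zero
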